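/- Let C := {f ∈ L¹[0,1] : f ≥ 0 a.e. and ∫₀¹ f = 1}, let C₀ be the convex hull of C ∪ {0}, let T : L¹[0,1] → L¹[0,1] be defined by (Tf)(t) = 2f(2t) for t ∈ [0,1/2] and 0 for t ∈ (1/2,1], and let R : C₀ → C be given by R(f) = (1 − ‖f‖₁)·𝟙 + f, where 𝟙 is the constant function 1. Set G := T ∘ R. Then: (i) ‖λf + (1−λ)g‖₁ = λ‖f‖₁ + (1−λ)‖g‖₁ for all f, g ∈ C₀ and λ ∈ [0,1], so R is an affine retraction of C₀ onto C and G : C₀ → C₀ is affine; (ii) ‖Gⁿf − Gⁿg‖₁ ≤ 2‖f − g‖₁ for all f, g ∈ C₀ and all n ∈ ℕ; (iii) G has no fixed point in C₀. -/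

import Mathlib

open MeasureTheory Filter Topology

/-- Lebesgue measure on `[0,1]`. -/
noncomputable def μ01 : Measure ℝ := volume.restrict (Set.Icc 0 1)

instance : IsFiniteMeasure μ01 := by
  constructor
  simp [μ01, Real.volume_Icc]

/-- The constant function `1` as an element of `L¹[0,1]`. -/
noncomputable def oneL1 : Lp ℝ 1 μ01 := (memLp_const (1 : ℝ)).toLp (fun _ => (1 : ℝ))

/-- `C = {f ∈ L¹[0,1] : f ≥ 0 a.e., ∫ f = 1}`. -/
noncomputable def posProbC : Set (Lp ℝ 1 μ01) :=
  {f | (∀ᵐ t ∂μ01, 0 ≤ f t) ∧ ∫ t, f t ∂μ01 = 1}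

/-- `C₀ = conv(C ∪ {0})`. -/
noncomputable def posProbC₀ : Set (Lp ℝ 1 μ01) :=
  convexHull ℝ (posProbC ∪ {(0 : Lp ℝ 1 μ01)})

/-- The retraction `R f = (1 - ‖f‖₁)·𝟙 + f`. -/
noncomputable def Rmap (f : Lp ℝ 1 μ01) : Lp ℝ 1 μ01 := (1 - ‖f‖) • oneL1 + f

/-!
On `C₀` every function is nonnegative, so the `L¹` norm is the integral and hence affine; this
makes `R` affine, and `R f - R g = (‖g‖ - ‖f‖)𝟙 + (f - g)` shows that `R` is `2`-Lipschitz.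
The doubling operator `T` is linear, positive, and preserves integrals, so it is an isometry
mapping `C` into `C`. Thus `G` maps `C₀` into `C` and acts isometrically on `C`, which bounds
all its iterates by `2`. A fixed point `f = Tf` would vanish a.e. on `(2⁻ⁿ, 1]` for every `n`,
so `f = 0`, contradicting `∫ f = 1`.
-/

open Set

section L1

variable {α : Type*} [MeasurableSpace α] {ν : Measure α}

lemma L1.norm_eq_integral_of_ae_nonneg {f : α →₁[ν] ℝ} (hf : 0 ≤ᵐ[ν] f) :
    ‖f‖ = ∫ t, f t ∂ν := by
  rw [L1.norm_eq_integral_norm]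
  refine integral_congr_ae ?_
  filter_upwards [hf] with t ht
  exact Real.norm_of_nonneg ht

lemma L1.coeFn_linear_combination (f g : α →₁[ν] ℝ) (a b : ℝ) :
    ⇑(a • f + b • g) =ᵐ[ν] fun t => a * f t + b * g t := by
  filter_upwards [Lp.coeFn_add (a • f) (b • g), Lp.coeFn_smul a f, Lp.coeFn_smul b g]
    with t hadd hf hg
  rw [hadd]
  simp [hf, hg]

lemma L1.integral_linear_combination (f g : α →₁[ν] ℝ) (a b : ℝ) :
    ∫ t, (a • f + b • g) t ∂ν = a * ∫ t, f t ∂ν + b * ∫ t, g t ∂ν := by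
  rw [integral_congr_ae (L1.coeFn_linear_combination f g a b),
    integral_add ((L1.integrable_coeFn f).const_mul a) ((L1.integrable_coeFn g).const_mul b),
    integral_const_mul, integral_const_mul]

lemma L1.ae_nonneg_linear_combination {f g : α →₁[ν] ℝ} {a b : ℝ} (hf : 0 ≤ᵐ[ν] f)
    (hg : 0 ≤ᵐ[ν] g) (ha : 0 ≤ a) (hb : 0 ≤ b) : 0 ≤ᵐ[ν] ⇑(a • f + b • g) := by
  filter_upwards [L1.coeFn_linear_combination f g a b, hf, hg] with t ht hft hgt
  rw [ht]
  exact add_nonneg (mul_nonneg ha hft) (mul_nonneg hb hgt)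

lemma L1.norm_linear_combination_of_ae_nonneg {f g : α →₁[ν] ℝ} {a b : ℝ} (hf : 0 ≤ᵐ[ν] f)
    (hg : 0 ≤ᵐ[ν] g) (ha : 0 ≤ a) (hb : 0 ≤ b) :
    ‖a • f + b • g‖ = a * ‖f‖ + b * ‖g‖ := by
  rw [L1.norm_eq_integral_of_ae_nonneg (L1.ae_nonneg_linear_combination hf hg ha hb),
    L1.integral_linear_combination, L1.norm_eq_integral_of_ae_nonneg hf,
    L1.norm_eq_integral_of_ae_nonneg hg]

lemma convex_setOf_ae_nonneg_integral_le_one :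
    Convex ℝ {f : α →₁[ν] ℝ | 0 ≤ᵐ[ν] f ∧ ∫ t, f t ∂ν ≤ 1} := by
  rintro f ⟨hf, hfint⟩ g ⟨hg, hgint⟩ a b ha hb hab
  refine ⟨L1.ae_nonneg_linear_combination hf hg ha hb, ?_⟩
  rw [L1.integral_linear_combination]
  nlinarith

end L1

section Iterate

variable {E : Type*} [SeminormedAddCommGroup E] {G : E → E} {s t : Set E}

lemma norm_iterate_sub_eq_of_isometryOn (hmaps : MapsTo G t t)
    (hiso : ∀ x ∈ t, ∀ y ∈ t, ‖G x - G y‖ = ‖x - y‖) (n : ℕ) {x y : E} (hx : x ∈ t)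
    (hy : y ∈ t) : ‖G^[n] x - G^[n] y‖ = ‖x - y‖ := by
  induction n with
  | zero => rfl
  | succ n ih =>
    rw [Function.iterate_succ_apply', Function.iterate_succ_apply',
      hiso _ (hmaps.iterate n hx) _ (hmaps.iterate n hy), ih]

lemma norm_iterate_sub_le_of_mapsTo_isometryOn {K : ℝ} (hK : 1 ≤ K) (hst : MapsTo G s t)
    (ht : MapsTo G t t) (hiso : ∀ x ∈ t, ∀ y ∈ t, ‖G x - G y‖ = ‖x - y‖)
    (hlip : ∀ x ∈ s, ∀ y ∈ s, ‖G x - G y‖ ≤ K * ‖x - y‖) (n : ℕ) {x y : E} (hx : x ∈ s)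
    (hy : y ∈ s) : ‖G^[n] x - G^[n] y‖ ≤ K * ‖x - y‖ := by
  cases n with
  | zero => exact le_mul_of_one_le_left (norm_nonneg _) hK
  | succ n =>
    rw [Function.iterate_succ_apply, Function.iterate_succ_apply,
      norm_iterate_sub_eq_of_isometryOn ht hiso n (hst hx) (hst hy)]
    exact hlip x hx y hy

end Iterate

lemma ae_mem_Icc_μ01 : ∀ᵐ t ∂μ01, t ∈ Icc (0 : ℝ) 1 :=
  ae_restrict_mem measurableSet_Icc

lemma measureReal_μ01_univ : μ01.real univ = 1 := by
  simp [μ01, measureReal_def, Real.volume_Icc]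

lemma integral_const_μ01 (c : ℝ) : ∫ _, c ∂μ01 = c := by
  rw [integral_const, measureReal_μ01_univ, one_smul]

lemma coeFn_oneL1 : oneL1 =ᵐ[μ01] fun _ => 1 := MemLp.coeFn_toLp _

lemma norm_oneL1 : ‖oneL1‖ = 1 := by
  have hpos : 0 ≤ᵐ[μ01] oneL1 := by
    filter_upwards [coeFn_oneL1] with t ht
    simp [ht]
  rw [L1.norm_eq_integral_of_ae_nonneg hpos, integral_congr_ae coeFn_oneL1, integral_const_μ01]

lemma posProbC_subset_posProbC₀ : posProbC ⊆ posProbC₀ :=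
  subset_union_left.trans (subset_convexHull ℝ _)

lemma posProbC₀_subset : posProbC₀ ⊆ {f | 0 ≤ᵐ[μ01] f ∧ ∫ t, f t ∂μ01 ≤ 1} := by
  refine convexHull_min ?_ convex_setOf_ae_nonneg_integral_le_one
  rintro g (⟨hg, hgint⟩ | rfl)
  · exact ⟨hg, hgint.le⟩
  · refine ⟨(Lp.coeFn_zero ℝ 1 μ01).symm.le, ?_⟩
    rw [integral_congr_ae (Lp.coeFn_zero ℝ 1 μ01)]
    simp

lemma norm_eq_integral_of_mem_posProbC₀ {f : Lp ℝ 1 μ01} (hf : f ∈ posProbC₀) :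
    ‖f‖ = ∫ t, f t ∂μ01 :=
  L1.norm_eq_integral_of_ae_nonneg (posProbC₀_subset hf).1

lemma norm_le_one_of_mem_posProbC₀ {f : Lp ℝ 1 μ01} (hf : f ∈ posProbC₀) : ‖f‖ ≤ 1 :=
  (norm_eq_integral_of_mem_posProbC₀ hf).trans_le (posProbC₀_subset hf).2

lemma norm_eq_one_of_mem_posProbC {f : Lp ℝ 1 μ01} (hf : f ∈ posProbC) : ‖f‖ = 1 :=
  (L1.norm_eq_integral_of_ae_nonneg hf.1).trans hf.2

lemma norm_affineOn_posProbC₀ {f g : Lp ℝ 1 μ01} (hf : f ∈ posProbC₀) (hg : g ∈ posProbC₀)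
    {l : ℝ} (hl₀ : 0 ≤ l) (hl₁ : l ≤ 1) :
    ‖l • f + (1 - l) • g‖ = l * ‖f‖ + (1 - l) * ‖g‖ :=
  L1.norm_linear_combination_of_ae_nonneg (posProbC₀_subset hf).1 (posProbC₀_subset hg).1 hl₀
    (sub_nonneg.2 hl₁)

lemma coeFn_Rmap (f : Lp ℝ 1 μ01) : Rmap f =ᵐ[μ01] fun t => (1 - ‖f‖) + f t := by
  filter_upwards [Lp.coeFn_add ((1 - ‖f‖) • oneL1) f, Lp.coeFn_smul (1 - ‖f‖) oneL1,
    coeFn_oneL1] with t hadd hsmul hone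
  rw [Rmap, hadd]
  simp [hsmul, hone]

lemma mapsTo_Rmap : MapsTo Rmap posProbC₀ posProbC := by
  intro f hf
  obtain ⟨hpos, -⟩ := posProbC₀_subset hf
  have hnorm : 0 ≤ 1 - ‖f‖ := sub_nonneg.2 (norm_le_one_of_mem_posProbC₀ hf)
  refine ⟨?_, ?_⟩
  · filter_upwards [coeFn_Rmap f, hpos] with t ht hft
    rw [ht]
    exact add_nonneg hnorm hft
  · rw [integral_congr_ae (coeFn_Rmap f), integral_add (integrable_const _)
      (L1.integrable_coeFn f), integral_const_μ01, ← norm_eq_integral_of_mem_posProbC₀ hf]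
    ring

lemma Rmap_eq_self {f : Lp ℝ 1 μ01} (hf : f ∈ posProbC) : Rmap f = f := by
  simp [Rmap, norm_eq_one_of_mem_posProbC hf]

lemma Rmap_affineOn {f g : Lp ℝ 1 μ01} (hf : f ∈ posProbC₀) (hg : g ∈ posProbC₀) {l : ℝ}
    (hl₀ : 0 ≤ l) (hl₁ : l ≤ 1) :
    Rmap (l • f + (1 - l) • g) = l • Rmap f + (1 - l) • Rmap g := by
  rw [Rmap, Rmap, Rmap, norm_affineOn_posProbC₀ hf hg hl₀ hl₁]
  module

lemma norm_Rmap_sub_Rmap_le (f g : Lp ℝ 1 μ01) : ‖Rmap f - Rmap g‖ ≤ 2 * ‖f - g‖ := by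
  have hdiff : Rmap f - Rmap g = (‖g‖ - ‖f‖) • oneL1 + (f - g) := by
    rw [Rmap, Rmap]
    module
  calc ‖Rmap f - Rmap g‖ ≤ ‖(‖g‖ - ‖f‖) • oneL1‖ + ‖f - g‖ := hdiff ▸ norm_add_le _ _
    _ = |‖g‖ - ‖f‖| + ‖f - g‖ := by rw [norm_smul, norm_oneL1, mul_one, Real.norm_eq_abs]
    _ ≤ ‖g - f‖ + ‖f - g‖ := by gcongr; exact abs_norm_sub_norm_le g f
    _ = 2 * ‖f - g‖ := by rw [norm_sub_rev]; ring

noncomputable def doubling (φ : ℝ → ℝ) : ℝ → ℝ := fun t => if t ≤ 1 / 2 then 2 * φ (2 * t) else 0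

lemma ae_μ01_comp_two_mul {p : ℝ → Prop} (hp : ∀ᵐ t ∂μ01, p t) :
    ∀ᵐ t ∂μ01, t ≤ 1 / 2 → p (2 * t) := by
  rw [ae_iff, μ01, Measure.restrict_apply' measurableSet_Icc] at hp ⊢
  have hsub : {t : ℝ | ¬(t ≤ 1 / 2 → p (2 * t))} ∩ Icc 0 1 ⊆
      (fun t : ℝ => 2 * t) ⁻¹' ({t : ℝ | ¬p t} ∩ Icc 0 1) := by
    rintro t ⟨ht, ht₀, -⟩
    obtain ⟨hle, hnp⟩ := Classical.not_imp.1 ht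
    exact ⟨hnp, by linarith, by linarith⟩
  refine measure_mono_null hsub ?_
  rw [Real.volume_preimage_mul_left two_ne_zero, hp, mul_zero]

lemma doubling_congr_ae {φ ψ : ℝ → ℝ} (h : φ =ᵐ[μ01] ψ) : doubling φ =ᵐ[μ01] doubling ψ := by
  filter_upwards [ae_μ01_comp_two_mul h] with t ht
  unfold doubling
  split_ifs with hle
  · rw [ht hle]
  · rfl

lemma doubling_linear_combination (φ ψ : ℝ → ℝ) (a b : ℝ) (t : ℝ) :
    doubling (fun x => a * φ x + b * ψ x) t = a * doubling φ t + b * doubling ψ t := by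
  unfold doubling
  split_ifs <;> ring

lemma abs_doubling (φ : ℝ → ℝ) (t : ℝ) : |doubling φ t| = doubling (fun x => |φ x|) t := by
  unfold doubling
  split_ifs <;> simp [abs_mul]

lemma doubling_ae_nonneg {φ : ℝ → ℝ} (hφ : 0 ≤ᵐ[μ01] φ) : 0 ≤ᵐ[μ01] doubling φ := by
  filter_upwards [ae_μ01_comp_two_mul hφ] with t ht
  unfold doubling
  split_ifs with hle
  · have := ht hle
    simp only [Pi.zero_apply] at this ⊢
    positivity
  · rfl

lemma integral_doubling (φ : ℝ → ℝ) : ∫ t, doubling φ t ∂μ01 = ∫ t, φ t ∂μ01 := by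
  have hind : doubling φ = (Iic (1 / 2 : ℝ)).indicator (fun t => 2 * φ (2 * t)) := by
    funext t
    simp [doubling, indicator_apply]
  have hIcc : Icc (0 : ℝ) 1 ∩ Iic (1 / 2) = Icc 0 (1 / 2) := by
    rw [← Ici_inter_Iic, inter_assoc, Iic_inter_Iic, min_eq_right (by norm_num), Ici_inter_Iic]
  rw [μ01, hind, setIntegral_indicator measurableSet_Iic, hIcc, integral_Icc_eq_integral_Ioc,
    integral_Icc_eq_integral_Ioc, ← intervalIntegral.integral_of_le (by norm_num),
    ← intervalIntegral.integral_of_le zero_le_one, intervalIntegral.integral_const_mul,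
    intervalIntegral.integral_comp_mul_left φ two_ne_zero]
  norm_num
  ring

lemma ae_eq_zero_of_ae_eq_doubling {φ : ℝ → ℝ} (hφ : φ =ᵐ[μ01] doubling φ) : φ =ᵐ[μ01] 0 := by
  have hsupp : ∀ n : ℕ, ∀ᵐ t ∂μ01, (1 / 2 : ℝ) ^ n < t → φ t = 0 := by
    intro n
    induction n with
    | zero =>
      filter_upwards [ae_mem_Icc_μ01] with t ht hlt
      exact absurd ht.2 (by simpa using hlt)
    | succ n ih =>
      filter_upwards [hφ, ae_μ01_comp_two_mul ih] with t hdt hsupp hlt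
      rw [hdt, doubling]
      split_ifs with hle
      · rw [hsupp hle (by rw [pow_succ] at hlt; linarith), mul_zero]
      · rfl
  filter_upwards [ae_all_iff.2 hsupp, ae_mem_Icc_μ01, ae_restrict_of_ae (volume.ae_ne (0 : ℝ))]
    with t ht hmem hne
  obtain ⟨n, hn⟩ := exists_pow_lt_of_lt_one (hmem.1.lt_of_ne' hne) (by norm_num : (1 / 2 : ℝ) < 1)
  exact ht n hn

section DoublingOperator

variable {T : Lp ℝ 1 μ01 → Lp ℝ 1 μ01} (hT : ∀ f, T f =ᵐ[μ01] doubling f)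
include hT

lemma map_linear_combination_of_doubling (f g : Lp ℝ 1 μ01) (a b : ℝ) :
    T (a • f + b • g) = a • T f + b • T g := by
  refine Lp.ext ?_
  calc ⇑(T (a • f + b • g)) =ᵐ[μ01] doubling ⇑(a • f + b • g) := hT _
    _ =ᵐ[μ01] doubling fun x => a * f x + b * g x :=
      doubling_congr_ae (L1.coeFn_linear_combination f g a b)
    _ =ᵐ[μ01] ⇑(a • T f + b • T g) := by
      filter_upwards [hT f, hT g, L1.coeFn_linear_combination (T f) (T g) a b]
        with t hf hg hcomb
      rw [hcomb, hf, hg, doubling_linear_combination]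

lemma map_sub_of_doubling (f g : Lp ℝ 1 μ01) : T (f - g) = T f - T g := by
  simpa [sub_eq_add_neg] using map_linear_combination_of_doubling hT f g 1 (-1)

lemma integral_map_of_doubling (f : Lp ℝ 1 μ01) : ∫ t, T f t ∂μ01 = ∫ t, f t ∂μ01 :=
  (integral_congr_ae (hT f)).trans (integral_doubling f)

lemma norm_map_of_doubling (f : Lp ℝ 1 μ01) : ‖T f‖ = ‖f‖ := by
  rw [L1.norm_eq_integral_norm, L1.norm_eq_integral_norm]
  calc ∫ t, ‖T f t‖ ∂μ01 = ∫ t, doubling (fun x => |f x|) t ∂μ01 := by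
        refine integral_congr_ae ?_
        filter_upwards [hT f] with t ht
        rw [Real.norm_eq_abs, ht, abs_doubling]
    _ = ∫ t, ‖f t‖ ∂μ01 := integral_doubling _

lemma mapsTo_posProbC_of_doubling : MapsTo T posProbC posProbC := by
  refine fun f hf => ⟨?_, (integral_map_of_doubling hT f).trans hf.2⟩
  filter_upwards [hT f, doubling_ae_nonneg hf.1] with t ht hpos
  rw [ht]
  exact hpos

lemma map_ne_self_of_doubling {f : Lp ℝ 1 μ01} (hf : f ∈ posProbC) : T f ≠ f := by
  intro hfix
  have hdoubling := hT f
  rw [hfix] at hdoubling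
  have hint := hf.2
  rw [integral_congr_ae (ae_eq_zero_of_ae_eq_doubling hdoubling)] at hint
  simp at hint

end DoublingOperator

/-- With `T` the doubling map `(Tf)(t) = 2f(2t)` (and `0` on `(1/2,1]`) and
`R f = (1-‖f‖₁)𝟙 + f`, the map `G = T ∘ R` is an affine self-map of `C₀ = conv(C ∪ {0})`
whose iterates are `2`-Lipschitz, yet `G` has no fixed point in `C₀`. Moreover the norm is
affine on `C₀` and `R` is an affine retraction of `C₀` onto `C`. -/
theorem G_affine_two_lipschitz_no_fixedPoint
    (T : Lp ℝ 1 μ01 → Lp ℝ 1 μ01)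
    (hT : ∀ f : Lp ℝ 1 μ01, ∀ᵐ t ∂μ01,
      (T f : ℝ → ℝ) t = if t ≤ 1 / 2 then 2 * (f : ℝ → ℝ) (2 * t) else 0) :
    (∀ f ∈ posProbC₀, ∀ g ∈ posProbC₀, ∀ l : ℝ, 0 ≤ l → l ≤ 1 →
      ‖l • f + (1 - l) • g‖ = l * ‖f‖ + (1 - l) * ‖g‖) ∧
    Set.MapsTo Rmap posProbC₀ posProbC ∧
    (∀ f ∈ posProbC, Rmap f = f) ∧
    (∀ f ∈ posProbC₀, ∀ g ∈ posProbC₀, ∀ l : ℝ, 0 ≤ l → l ≤ 1 →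
      Rmap (l • f + (1 - l) • g) = l • Rmap f + (1 - l) • Rmap g) ∧
    Set.MapsTo (T ∘ Rmap) posProbC₀ posProbC₀ ∧
    (∀ f ∈ posProbC₀, ∀ g ∈ posProbC₀, ∀ l : ℝ, 0 ≤ l → l ≤ 1 →
      (T ∘ Rmap) (l • f + (1 - l) • g) = l • (T ∘ Rmap) f + (1 - l) • (T ∘ Rmap) g) ∧
    (∀ n : ℕ, ∀ f ∈ posProbC₀, ∀ g ∈ posProbC₀,
      ‖(T ∘ Rmap)^[n] f - (T ∘ Rmap)^[n] g‖ ≤ 2 * ‖f - g‖) ∧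
    (∀ f ∈ posProbC₀, (T ∘ Rmap) f ≠ f) := by
  have hG : MapsTo (T ∘ Rmap) posProbC₀ posProbC :=
    (mapsTo_posProbC_of_doubling hT).comp mapsTo_Rmap
  have hG_iso : ∀ f ∈ posProbC, ∀ g ∈ posProbC, ‖(T ∘ Rmap) f - (T ∘ Rmap) g‖ = ‖f - g‖ :=
    fun f hf g hg => by
      rw [Function.comp_apply, Function.comp_apply, Rmap_eq_self hf, Rmap_eq_self hg,
        ← map_sub_of_doubling hT, norm_map_of_doubling hT]
  have hG_lip : ∀ f ∈ posProbC₀, ∀ g ∈ posProbC₀,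
      ‖(T ∘ Rmap) f - (T ∘ Rmap) g‖ ≤ 2 * ‖f - g‖ := fun f _ g _ => by
    rw [Function.comp_apply, Function.comp_apply, ← map_sub_of_doubling hT,
      norm_map_of_doubling hT]
    exact norm_Rmap_sub_Rmap_le f g
  refine ⟨fun f hf g hg l hl₀ hl₁ => norm_affineOn_posProbC₀ hf hg hl₀ hl₁, mapsTo_Rmap,
    fun f hf => Rmap_eq_self hf, fun f hf g hg l hl₀ hl₁ => Rmap_affineOn hf hg hl₀ hl₁,
    hG.mono_right posProbC_subset_posProbC₀, fun f hf g hg l hl₀ hl₁ => ?_,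
    fun n f hf g hg => norm_iterate_sub_le_of_mapsTo_isometryOn one_le_two hG
      (hG.mono_left posProbC_subset_posProbC₀) hG_iso hG_lip n hf hg,
    fun f hf hfix => ?_⟩
  · simp only [Function.comp_apply, Rmap_affineOn hf hg hl₀ hl₁,
      map_linear_combination_of_doubling hT]
  · have hfC : f ∈ posProbC := hfix ▸ hG hf
    exact map_ne_self_of_doubling hT hfC (by rwa [Function.comp_apply, Rmap_eq_self hfC] at hfix)
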